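/- Let S be a numerical semigroup of multiplicity 4 with Apéry set {0, a_1, a_2, a_3} satisfying a_3 = a_1 + a_2, and let R = k[S] over a field k. The multiset resolution F′_• of k over R is minimal, i.e., ∂(F′_d) ⊆ 𝔪·F′_{d−1} for all d ≥ 1, if and only if b_{11} > 0, that is, if and only if 2a_1 > a_2. (Theorem 4.1, second assertion.) -/

import Mathlib

open Polynomial CategoryTheory

set_option synthInstance.maxHeartbeats 1000000
set_option maxHeartbeats 1600000


/-- A numerical semigroup: a cofinite additive submonoid of `ℕ`. -/
structure NumericalSemigroup where
  carrier : AddSubmonoid ℕ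
  cofinite : ((carrier : Set ℕ))ᶜ.Finite

namespace NumericalSemigroup

/-- The multiplicity `m = min (S \ {0})`. -/
noncomputable def mult (S : NumericalSemigroup) : ℕ :=
  sInf {n | n ∈ S.carrier ∧ n ≠ 0}

/-- `apery S i` is the smallest element of `S` congruent to `i` mod `m`. -/
noncomputable def apery (S : NumericalSemigroup) (i : ℕ) : ℕ :=
  sInf {n | n ∈ S.carrier ∧ n % S.mult = i % S.mult}

lemma exists_bound (S : NumericalSemigroup) : ∃ N, ∀ n, N ≤ n → n ∈ S.carrier := by
  obtain ⟨C, hC⟩ := S.cofinite.bddAbove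
  refine ⟨C + 1, fun n hn => ?_⟩
  by_contra h
  exact absurd (hC h) (by omega)

lemma mult_spec (S : NumericalSemigroup) : S.mult ∈ S.carrier ∧ S.mult ≠ 0 := by
  obtain ⟨N, hN⟩ := S.exists_bound
  have h : {n | n ∈ S.carrier ∧ n ≠ 0}.Nonempty := ⟨N + 1, hN _ (by omega), by omega⟩
  exact Nat.sInf_mem h

lemma apery_spec (S : NumericalSemigroup) (i : ℕ) :
    S.apery i ∈ S.carrier ∧ S.apery i % S.mult = i % S.mult := by
  obtain ⟨N, hN⟩ := S.exists_bound
  have hm : S.mult ≠ 0 := S.mult_spec.2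
  have h : {n | n ∈ S.carrier ∧ n % S.mult = i % S.mult}.Nonempty := by
    refine ⟨i % S.mult + S.mult * (N + 1), hN _ ?_, ?_⟩
    · have h1 : 1 ≤ S.mult := Nat.one_le_iff_ne_zero.mpr hm
      have : N + 1 ≤ S.mult * (N + 1) := Nat.le_mul_of_pos_left _ h1
      omega
    · simp [Nat.add_mul_mod_self_left, Nat.mod_mod_of_dvd]
  exact Nat.sInf_mem h

/-- The Apéry numbers `a_i` for `i ∈ ℤ/m`, with the convention `a_0 = m`. -/
noncomputable def a (S : NumericalSemigroup) (i : ZMod S.mult) : ℕ :=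
  if i = 0 then S.mult else S.apery i.val

lemma a_mem (S : NumericalSemigroup) (i : ZMod S.mult) : S.a i ∈ S.carrier := by
  unfold a; split
  · exact S.mult_spec.1
  · exact (S.apery_spec _).1

/-- The quantities `b_{ij} = (a_i + a_j - a_{i+j})/m`. -/
noncomputable def b (S : NumericalSemigroup) (i j : ZMod S.mult) : ℕ :=
  (S.a i + S.a j - S.a (i + j)) / S.mult

/-- The semigroup algebra `k[S]`, realized as the subalgebra of `k[t]`
spanned by the monomials `t^s` with `s ∈ S`. -/
def toRing (k : Type) [Field k] (S : NumericalSemigroup) : Subalgebra k (Polynomial k) where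
  carrier := {p | ∀ n, p.coeff n ≠ 0 → n ∈ S.carrier}
  add_mem' := by
    intro p q hp hq n h
    rw [Set.mem_setOf_eq] at hp hq
    by_contra hn
    have h1 : (p : Polynomial k).coeff n = 0 := by by_contra hc; exact hn (hp n hc)
    have h2 : (q : Polynomial k).coeff n = 0 := by by_contra hc; exact hn (hq n hc)
    simp [coeff_add, h1, h2] at h
  mul_mem' := by
    intro p q hp hq n h
    rw [Set.mem_setOf_eq] at hp hq
    rw [Polynomial.coeff_mul] at h
    obtain ⟨⟨u, v⟩, huv, hne⟩ := Finset.exists_ne_zero_of_sum_ne_zero h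
    obtain ⟨h1, h2⟩ := mul_ne_zero_iff.mp hne
    have : u + v = n := Finset.HasAntidiagonal.mem_antidiagonal.mp huv
    exact this ▸ S.carrier.add_mem (hp u h1) (hq v h2)
  algebraMap_mem' := by
    intro r n h
    have : n = 0 := by
      by_contra hn
      simp [Polynomial.coeff_C, hn] at h
    exact this ▸ S.carrier.zero_mem

variable (k : Type) [Field k] (S : NumericalSemigroup)

/-- The monomial `x_j = t^{a_j}` as an element of `k[S]`. -/
noncomputable def xv (j : ZMod S.mult) : S.toRing k :=
  ⟨X ^ S.a j, by
    intro n h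
    have : n = S.a j := by
      by_contra hn
      simp [coeff_X_pow, hn] at h
    exact this ▸ S.a_mem j⟩

/-- The augmentation `k[S] → k = k[S]/𝔪`, given by the constant coefficient. -/
noncomputable def aug : S.toRing k →+* k :=
  (Polynomial.constantCoeff).comp ((S.toRing k).val.toRingHom)

/-- The maximal ideal `𝔪` of `k[S]`. -/
noncomputable def mIdeal : Ideal (S.toRing k) :=
  RingHom.ker (S.aug k)

/-- The residue field `k = k[S]/𝔪` as a module over `k[S]`. -/
def ResMod (_S : NumericalSemigroup) : Type := k

noncomputable instance : AddCommGroup (ResMod k S) := inferInstanceAs (AddCommGroup k)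
noncomputable instance : Module (S.toRing k) (ResMod k S) := Module.compHom k (S.aug k)

/-- `dim_k Tor_i^{k[S]}(k, k)` as a cardinal. -/
noncomputable def torDim (i : ℕ) : Cardinal :=
  Module.rank k (RestrictScalars k (S.toRing k)
    (((Tor (ModuleCat (S.toRing k)) i).obj
        (ModuleCat.of (S.toRing k) (ResMod k S))).obj
      (ModuleCat.of (S.toRing k) (ResMod k S))))


/-- The monomial `x_i = t^{a_i}` in `k[S]`, indexed by the residue `i ∈ ℕ`. -/
noncomputable def xa (i : ℕ) : S.toRing k :=
  ⟨X ^ S.apery i, by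
    intro n h
    have : n = S.apery i := by
      by_contra hn
      simp [coeff_X_pow, hn] at h
    exact this ▸ (S.apery_spec i).1⟩

/-- The monomial `y = t^m` in `k[S]`. -/
noncomputable def yv : S.toRing k :=
  ⟨X ^ S.mult, by
    intro n h
    have : n = S.mult := by
      by_contra hn
      simp [coeff_X_pow, hn] at h
    exact this ▸ S.mult_spec.1⟩

/-- Multisets of elements of `{0,1,2}` of cardinality `d` with at most one `0`,
encoded as triples `(c₀, c₁, c₂)` of multiplicities. -/
def MSIdx (d : ℕ) : Type :=
  {c : ℕ × ℕ × ℕ // c.1 ≤ 1 ∧ c.1 + c.2.1 + c.2.2 = d}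

/-- The basis vector `e'_c`, interpreted as `0` if `c₀ > 1` or `|c| ≠ d` (this encodes
the conventions `e'_c = 0` for `c₀ > 1` and `e'_{c - i} = 0` for `c_i = 0`). -/
noncomputable def Ems (d : ℕ) (c : ℕ × ℕ × ℕ) : MSIdx d →₀ S.toRing k :=
  if h : c.1 ≤ 1 ∧ c.1 + c.2.1 + c.2.2 = d then Finsupp.single ⟨c, h⟩ 1 else 0

/-- `b₁₁ = (2a₁ - a₂)/4`. -/
noncomputable def b11 : ℕ := (2 * S.apery 1 - S.apery 2) / 4

/-- `b₂₂ = (2a₂ - 4)/4`. -/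
noncomputable def b22 : ℕ := (2 * S.apery 2 - 4) / 4

/-- The differential `∂ : F'_{d+1} → F'_d` of the multiset complex. -/
noncomputable def delMS (d : ℕ) :
    (MSIdx (d + 1) →₀ S.toRing k) →ₗ[S.toRing k] (MSIdx d →₀ S.toRing k) :=
  Finsupp.lift (MSIdx d →₀ S.toRing k) (S.toRing k) (MSIdx (d + 1)) fun c =>
    S.xa k 2 • S.Ems k d (c.1.1, c.1.2.1, c.1.2.2 - 1)
      + (if c.1.2.2 % 2 = 0 then
          S.xa k 1 • S.Ems k d (c.1.1, c.1.2.1 - 1, c.1.2.2)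
            - (S.yv k ^ S.b11) • S.Ems k d (c.1.1, c.1.2.1 - 2, c.1.2.2 + 1)
        else -(S.xa k 1 • S.Ems k d (c.1.1, c.1.2.1 - 1, c.1.2.2)))
      + ((-1 : S.toRing k) ^ d) •
          (S.yv k • S.Ems k d (c.1.1 - 1, c.1.2.1, c.1.2.2)
            + (S.yv k ^ S.b22) • S.Ems k d (c.1.1 + 1, c.1.2.1, c.1.2.2 - 2))

noncomputable instance : One (ResMod k S) := inferInstanceAs (One k)

/-- The augmentation `F'_0 = R → k = R/𝔪`. -/
noncomputable def augMS : (MSIdx 0 →₀ S.toRing k) →ₗ[S.toRing k] ResMod k S :=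
  Finsupp.lift (ResMod k S) (S.toRing k) (MSIdx 0) fun _ => (1 : ResMod k S)

end NumericalSemigroup

/-! Every coefficient of `∂` is one of `x₁, x₂, y, y^{b₁₁}, y^{b₂₂}`. The Apéry elements `a₁, a₂` and
`m` are nonzero and `b₂₂ > 0` because `a₂ ≥ m = 4`, so all of these lie in `𝔪` except possibly
`y^{b₁₁}`, and `b₁₁ > 0 ↔ 2a₁ > a₂` because `2a₁ - a₂ ≡ 0 (mod 4)`. If `b₁₁ = 0`, the coefficient
of `e′_{2}` in `∂e′_{1,1}` is the unit `-1`. -/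

namespace Finsupp

theorem apply_mem_of_mem_ideal_smul_top {R α : Type*} [CommSemiring R] {I : Ideal R}
    {z : α →₀ R} (hz : z ∈ I • (⊤ : Submodule R (α →₀ R))) (i : α) : z i ∈ I := by
  simpa using Submodule.smul_top_le_comap_smul_top I (lapply i) hz

theorem range_lift_le {R M X : Type*} [Semiring R] [AddCommMonoid M] [Module R M]
    {p : Submodule R M} {f : X → M} (hf : ∀ x, f x ∈ p) :
    LinearMap.range (lift M R X f) ≤ p := by
  rintro _ ⟨g, rfl⟩
  induction g using induction_linear with
  | zero => simp
  | add g h hg hh => rw [map_add]; exact p.add_mem hg hh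
  | single x r => simpa using p.smul_mem r (hf x)

end Finsupp

namespace NumericalSemigroup

section

variable {k : Type} [Field k] {S : NumericalSemigroup}

theorem mult_le_of_mem {n : ℕ} (hn : n ∈ S.carrier) (h0 : n ≠ 0) : S.mult ≤ n :=
  Nat.sInf_le ⟨hn, h0⟩

theorem apery_mod_four (hm : S.mult = 4) (i : ℕ) : S.apery i % 4 = i % 4 :=
  hm ▸ (S.apery_spec i).2

theorem b11_pos_iff (hm : S.mult = 4) : 0 < S.b11 ↔ S.apery 2 < 2 * S.apery 1 := by
  have := apery_mod_four hm 1
  have := apery_mod_four hm 2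
  unfold b11
  omega

theorem b22_pos (hm : S.mult = 4) : 0 < S.b22 := by
  have h2 := apery_mod_four hm 2
  have := mult_le_of_mem (S.apery_spec 2).1 (by omega : S.apery 2 ≠ 0)
  unfold b22
  omega

theorem mem_mIdeal_iff {x : S.toRing k} : x ∈ S.mIdeal k ↔ (x : k[X]).coeff 0 = 0 := by
  simp [mIdeal, RingHom.mem_ker, aug]

theorem yv_pow_mem_mIdeal_iff {n : ℕ} : S.yv k ^ n ∈ S.mIdeal k ↔ n ≠ 0 := by
  simp [mem_mIdeal_iff, yv, ← pow_mul, coeff_X_pow, eq_comm, S.mult_spec.2]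

theorem xa_mem_mIdeal {i : ℕ} (h : S.apery i ≠ 0) : S.xa k i ∈ S.mIdeal k := by
  simp [mem_mIdeal_iff, xa, coeff_X_pow, Ne.symm h]

theorem Ems_apply {d : ℕ} (c : ℕ × ℕ × ℕ) (i : MSIdx d) :
    S.Ems k d c i = if c = i.1 then 1 else 0 := by
  unfold Ems
  split_ifs with hc hci hci
  · obtain rfl : (⟨c, hc⟩ : MSIdx d) = i := Subtype.ext hci
    exact Finsupp.single_eq_same
  · exact Finsupp.single_eq_of_ne fun h => hci (congrArg Subtype.val h).symm
  · exact absurd (hci ▸ i.2) hc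
  · rfl

theorem delMS_one_single_apply {c : MSIdx 2} (hc : c.1 = (0, 2, 0)) {i : MSIdx 1}
    (hi : i.1 = (0, 0, 1)) : S.delMS k 1 (Finsupp.single c 1) i = -(S.yv k ^ S.b11) := by
  rw [delMS, Finsupp.lift_apply, Finsupp.sum_single_index (by simp)]
  simp [Ems_apply, hc, hi]

theorem range_delMS_le_smul_top (h1 : S.apery 1 ≠ 0) (h2 : S.apery 2 ≠ 0) (h11 : S.b11 ≠ 0)
    (h22 : S.b22 ≠ 0) (d : ℕ) :
    LinearMap.range (S.delMS k d) ≤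
      S.mIdeal k • (⊤ : Submodule (S.toRing k) (MSIdx d →₀ S.toRing k)) := by
  have hmem {r : S.toRing k} (hr : r ∈ S.mIdeal k) (v : MSIdx d →₀ S.toRing k) :
      r • v ∈ S.mIdeal k • (⊤ : Submodule (S.toRing k) (MSIdx d →₀ S.toRing k)) :=
    Submodule.smul_mem_smul hr Submodule.mem_top
  have hx1 := xa_mem_mIdeal (k := k) h1
  have hx2 := xa_mem_mIdeal (k := k) h2
  have hy : S.yv k ∈ S.mIdeal k := by simpa using yv_pow_mem_mIdeal_iff.2 one_ne_zero
  have hy11 : S.yv k ^ S.b11 ∈ S.mIdeal k := yv_pow_mem_mIdeal_iff.2 h11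
  have hy22 : S.yv k ^ S.b22 ∈ S.mIdeal k := yv_pow_mem_mIdeal_iff.2 h22
  refine Finsupp.range_lift_le fun c => add_mem (add_mem (hmem hx2 _) ?_)
    (Submodule.smul_mem _ _ (add_mem (hmem hy _) (hmem hy22 _)))
  split_ifs
  · exact Submodule.sub_mem (M := MSIdx d →₀ S.toRing k) _ (hmem hx1 _) (hmem hy11 _)
  · exact Submodule.neg_mem (M := MSIdx d →₀ S.toRing k) _ (hmem hx1 _)

theorem b11_ne_zero_of_range_delMS_le
    (h : LinearMap.range (S.delMS k 1) ≤
      S.mIdeal k • (⊤ : Submodule (S.toRing k) (MSIdx 1 →₀ S.toRing k))) : S.b11 ≠ 0 := by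
  let c : MSIdx 2 := ⟨(0, 2, 0), by decide⟩
  let i : MSIdx 1 := ⟨(0, 0, 1), by decide⟩
  have hmem := Finsupp.apply_mem_of_mem_ideal_smul_top
    (h (LinearMap.mem_range_self _ (Finsupp.single c 1))) i
  rwa [delMS_one_single_apply rfl rfl, neg_mem_iff, yv_pow_mem_mIdeal_iff] at hmem

end

theorem multiset_resolution_minimal_iff_general (k : Type) [Field k] (S : NumericalSemigroup)
    (hm : S.mult = 4) :
    (∀ d : ℕ, LinearMap.range (S.delMS k d) ≤
      S.mIdeal k • (⊤ : Submodule (S.toRing k) (MSIdx d →₀ S.toRing k))) ↔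
    S.apery 2 < 2 * S.apery 1 := by
  have h1 : S.apery 1 ≠ 0 := by have := apery_mod_four hm 1; omega
  have h2 : S.apery 2 ≠ 0 := by have := apery_mod_four hm 2; omega
  rw [← b11_pos_iff hm, Nat.pos_iff_ne_zero]
  exact ⟨fun h => b11_ne_zero_of_range_delMS_le (h 1),
    fun h11 => range_delMS_le_smul_top h1 h2 h11 (b22_pos hm).ne'⟩

/-- **Theorem 4.1 (second assertion).** For `S` of multiplicity 4 with `a₃ = a₁ + a₂`,
the multiset resolution `F'_•` of `k` over `R = k[S]` is minimal, i.e.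
`∂(F'_d) ⊆ 𝔪·F'_{d-1}` for all `d ≥ 1`, if and only if `b₁₁ > 0`, that is, `2a₁ > a₂`. -/
theorem multiset_resolution_minimal_iff (k : Type) [Field k] (S : NumericalSemigroup)
    (hm : S.mult = 4) (h3 : S.apery 3 = S.apery 1 + S.apery 2) :
    (∀ d : ℕ, LinearMap.range (S.delMS k d) ≤
      S.mIdeal k • (⊤ : Submodule (S.toRing k) (MSIdx d →₀ S.toRing k))) ↔
    S.apery 2 < 2 * S.apery 1 :=
  multiset_resolution_minimal_iff_general k S hm

end NumericalSemigroup
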